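/- arXiv:1208.4073 — 6 statements merged into one kernel-verified Lean document; each statement's English description precedes it below -/
import Mathlib

section
/- With notation as in the context, fix a strictly increasing index sequence I = (i_1, …, i_r) with r ≥ 1. If χ_I = Σ_ε a^ε_I w^ε_I (a sum over binary r-tuples ε with coefficients in B, where w^ε_I is the product of w_{i_j} placed in the first or second ΛW factor according to ε_j) satisfies β(χ_I) = γ(χ_I), then χ_I = a·S_I for some a ∈ B, where S_I = (w_{i_1} + w'_{i_1})⋯(w_{i_r} + w'_{i_r}). -/
/-!
Common setup: `B` a commutative ℚ-algebra (playing the role of the coefficient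
(graded-)commutative algebra), `ι` an ordered index set for a basis `{w_i}` of an
oddly-graded vector space `W`.  Since `W` is concentrated in odd degrees, the free
graded-commutative algebras `B ⊗ ΛW ⊗ ΛW` and `B ⊗ ΛW ⊗ ΛW ⊗ ΛW` are the exterior
algebras over `B` on the free modules with bases indexed by `ι ⊕ ι` and `ι ⊕ ι ⊕ ι`.
-/

noncomputable section

variable (B : Type) [CommRing B] [Algebra ℚ B] (ι : Type) [LinearOrder ι]

/-- `B ⊗ ΛW ⊗ ΛW` -/
abbrev TwoFold := ExteriorAlgebra B ((ι ⊕ ι) →₀ B)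

/-- `B ⊗ ΛW ⊗ ΛW ⊗ ΛW` -/
abbrev ThreeFold := ExteriorAlgebra B ((ι ⊕ ι ⊕ ι) →₀ B)

variable {B ι}

/-- `w_i`, the generator of the first `ΛW` factor of `B ⊗ ΛW ⊗ ΛW`. -/
def w (i : ι) : TwoFold B ι := ExteriorAlgebra.ι B (Finsupp.single (Sum.inl i) 1)

/-- `w'_i`, the generator of the second `ΛW` factor of `B ⊗ ΛW ⊗ ΛW`. -/
def w' (i : ι) : TwoFold B ι := ExteriorAlgebra.ι B (Finsupp.single (Sum.inr i) 1)

/-- `w_i` in `B ⊗ ΛW ⊗ ΛW ⊗ ΛW`. -/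
def u (i : ι) : ThreeFold B ι := ExteriorAlgebra.ι B (Finsupp.single (Sum.inl i) 1)

/-- `w'_i` in `B ⊗ ΛW ⊗ ΛW ⊗ ΛW`. -/
def u' (i : ι) : ThreeFold B ι := ExteriorAlgebra.ι B (Finsupp.single (Sum.inr (Sum.inl i)) 1)

/-- `w''_i` in `B ⊗ ΛW ⊗ ΛW ⊗ ΛW`. -/
def u'' (i : ι) : ThreeFold B ι := ExteriorAlgebra.ι B (Finsupp.single (Sum.inr (Sum.inr i)) 1)

/-- The `B`-algebra map `B ⊗ ΛW ⊗ ΛW → B ⊗ ΛW ⊗ ΛW ⊗ ΛW` determined by a choice of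
(module-valued) images for the generators `w_i`, `w'_i`. -/
def genMap (g : ι ⊕ ι → (ι ⊕ ι ⊕ ι) →₀ B) : TwoFold B ι →ₐ[B] ThreeFold B ι :=
  ExteriorAlgebra.lift B
    ⟨(ExteriorAlgebra.ι B).comp ((Finsupp.lift ((ι ⊕ ι ⊕ ι) →₀ B) B (ι ⊕ ι)) g),
     fun m => by simp [ExteriorAlgebra.ι_sq_zero]⟩

/-- `α : w ↦ w, w' ↦ w'`. -/
def mapα : TwoFold B ι →ₐ[B] ThreeFold B ι :=
  genMap (Sum.elim (fun i => Finsupp.single (Sum.inl i) 1)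
    (fun i => Finsupp.single (Sum.inr (Sum.inl i)) 1))

/-- `β : w ↦ w + w', w' ↦ w''`. -/
def mapβ : TwoFold B ι →ₐ[B] ThreeFold B ι :=
  genMap (Sum.elim
    (fun i => Finsupp.single (Sum.inl i) 1 + Finsupp.single (Sum.inr (Sum.inl i)) 1)
    (fun i => Finsupp.single (Sum.inr (Sum.inr i)) 1))

/-- `γ : w ↦ w, w' ↦ w' + w''`. -/
def mapγ : TwoFold B ι →ₐ[B] ThreeFold B ι :=
  genMap (Sum.elim (fun i => Finsupp.single (Sum.inl i) 1)
    (fun i => Finsupp.single (Sum.inr (Sum.inl i)) 1 + Finsupp.single (Sum.inr (Sum.inr i)) 1))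

/-- `δ : w ↦ w', w' ↦ w''`. -/
def mapδ : TwoFold B ι →ₐ[B] ThreeFold B ι :=
  genMap (Sum.elim (fun i => Finsupp.single (Sum.inr (Sum.inl i)) 1)
    (fun i => Finsupp.single (Sum.inr (Sum.inr i)) 1))

/-- The monomial `w^ε_I = w_{i_1}^{ε_1} ⋯ w_{i_r}^{ε_r}`, where `w^0 = w` (first factor)
and `w^1 = w'` (second factor). -/
def mono {r : ℕ} (I : Fin r → ι) (ε : Fin r → Bool) : TwoFold B ι :=
  (List.ofFn fun j => if ε j then w' (I j) else w (I j)).prod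

/-- `S_I = (w_{i_1} + w'_{i_1}) ⋯ (w_{i_r} + w'_{i_r})`. -/
def SI {r : ℕ} (I : Fin r → ι) : TwoFold B ι :=
  (List.ofFn fun j => w (I j) + w' (I j)).prod


/-! ### Auxiliary machinery -/

open ExteriorAlgebra

/-- Noncommutative binomial expansion of an ordered product of sums. -/
lemma prod_add_expand {A : Type*} [Ring A] :
    ∀ (n : ℕ) (F G : Fin n → A),
      (List.ofFn fun j => F j + G j).prod
        = ∑ ε : Fin n → Bool, (List.ofFn fun j => if ε j then G j else F j).prod := by
  intro n
  induction n with
  | zero =>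
    intro F G
    simp
  | succ n ih =>
    intro F G
    rw [List.ofFn_succ, List.prod_cons, ih (fun j => F j.succ) (fun j => G j.succ)]
    rw [← Equiv.sum_comp (Fin.consEquiv fun _ : Fin (n + 1) => Bool)]
    rw [Fintype.sum_prod_type]
    have hterm : ∀ (b : Bool) (ε : Fin n → Bool),
        (List.ofFn fun j : Fin (n+1) =>
            if (Fin.consEquiv fun _ => Bool) (b, ε) j then G j else F j).prod
          = (if b then G 0 else F 0) *
            (List.ofFn fun j : Fin n => if ε j then G j.succ else F j.succ).prod := by
      intro b ε
      rw [List.ofFn_succ, List.prod_cons]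
      simp [Fin.consEquiv]
    simp only [hterm]
    rw [Fintype.sum_bool]
    rw [← Finset.mul_sum, ← Finset.mul_sum, add_mul, add_comm]
    simp

/-- Extraction of the coefficient of the monomial `e_{s 0} ⋯ e_{s (r-1)}` (for injective,
monotone `s`) as a linear functional, via determinants. -/
noncomputable def coeffFn {B : Type} [CommRing B] {κ : Type} (r : ℕ) (s : Fin r → κ) :
    ExteriorAlgebra B (κ →₀ B) →ₗ[B] B :=
  liftAlternating (Function.update (fun n => (0 : (κ →₀ B) [⋀^Fin n]→ₗ[B] B)) r
    (Matrix.detRowAlternating.compLinearMap (LinearMap.pi fun b => Finsupp.lapply (s b))))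

lemma coeffFn_ιMulti {B : Type} [CommRing B] {κ : Type} (r : ℕ) (s : Fin r → κ)
    (v : Fin r → (κ →₀ B)) :
    coeffFn r s (ιMulti B r v) = Matrix.det (Matrix.of fun a b => v a (s b)) := by
  rw [coeffFn, liftAlternating_apply_ιMulti, Function.update_self,
    AlternatingMap.compLinearMap_apply]
  rfl

lemma genMap_w {B : Type} [CommRing B] [Algebra ℚ B] {ι : Type} [LinearOrder ι]
    (g : ι ⊕ ι → (ι ⊕ ι ⊕ ι) →₀ B) (i : ι) :
    genMap g (w i : TwoFold B ι) = ExteriorAlgebra.ι B (g (Sum.inl i)) := by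
  rw [genMap, w, ExteriorAlgebra.lift_ι_apply]
  simp only [LinearMap.coe_comp, Function.comp_apply, Finsupp.lift_apply, zero_smul,
    Finsupp.sum_single_index, one_smul]

lemma genMap_w' {B : Type} [CommRing B] [Algebra ℚ B] {ι : Type} [LinearOrder ι]
    (g : ι ⊕ ι → (ι ⊕ ι ⊕ ι) →₀ B) (i : ι) :
    genMap g (w' i : TwoFold B ι) = ExteriorAlgebra.ι B (g (Sum.inr i)) := by
  rw [genMap, w', ExteriorAlgebra.lift_ι_apply]
  simp only [LinearMap.coe_comp, Function.comp_apply, Finsupp.lift_apply, zero_smul,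
    Finsupp.sum_single_index, one_smul]

variable {r : ℕ}

/-- Image vectors of the factors of `mono I ε` under `β`. -/
def vβ (I : Fin r → ι) (ε : Fin r → Bool) (j : Fin r) : (ι ⊕ ι ⊕ ι) →₀ B :=
  if ε j then Finsupp.single (Sum.inr (Sum.inr (I j))) 1
  else Finsupp.single (Sum.inl (I j)) 1 + Finsupp.single (Sum.inr (Sum.inl (I j))) 1

/-- Image vectors of the factors of `mono I ε` under `γ`. -/
def vγ (I : Fin r → ι) (ε : Fin r → Bool) (j : Fin r) : (ι ⊕ ι ⊕ ι) →₀ B :=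
  if ε j then Finsupp.single (Sum.inr (Sum.inl (I j))) 1
      + Finsupp.single (Sum.inr (Sum.inr (I j))) 1
  else Finsupp.single (Sum.inl (I j)) 1

lemma mapβ_mono (I : Fin r → ι) (ε : Fin r → Bool) :
    mapβ (mono I ε : TwoFold B ι) = ιMulti B r (vβ I ε) := by
  rw [mono, map_list_prod, List.map_ofFn, ιMulti_apply]
  have hfun : (⇑(mapβ : TwoFold B ι →ₐ[B] ThreeFold B ι) ∘ fun j => if ε j then w' (I j) else w (I j))
      = fun j => ExteriorAlgebra.ι B (vβ I ε j) := by
    funext j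
    by_cases hε : ε j <;>
      simp [Function.comp, hε, mapβ, genMap_w, genMap_w', vβ, map_add]
  rw [hfun]

lemma mapγ_mono (I : Fin r → ι) (ε : Fin r → Bool) :
    mapγ (mono I ε : TwoFold B ι) = ιMulti B r (vγ I ε) := by
  rw [mono, map_list_prod, List.map_ofFn, ιMulti_apply]
  have hfun : (⇑(mapγ : TwoFold B ι →ₐ[B] ThreeFold B ι) ∘ fun j => if ε j then w' (I j) else w (I j))
      = fun j => ExteriorAlgebra.ι B (vγ I ε j) := by
    funext j
    by_cases hε : ε j <;>
      simp [Function.comp, hε, mapγ, genMap_w, genMap_w', vγ, map_add]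
  rw [hfun]

/-- The index of the target monomial used to compare coefficients `a ε₀` and `a ε₁`. -/
def sfun (I : Fin r → ι) (ε₀ ε₁ : Fin r → Bool) (b : Fin r) : ι ⊕ ι ⊕ ι :=
  if ε₀ b then Sum.inr (Sum.inr (I b))
  else if ε₁ b then Sum.inr (Sum.inl (I b)) else Sum.inl (I b)


lemma detβ (I : Fin r → ι) (hI : Function.Injective I) (ε₀ ε₁ : Fin r → Bool)
    (hle : ∀ j, ε₀ j = true → ε₁ j = true) (ε : Fin r → Bool) :
    Matrix.det (Matrix.of fun a b => (vβ (B := B) I ε a) (sfun I ε₀ ε₁ b))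
      = if ε = ε₀ then 1 else 0 := by
  have hdiag : (Matrix.of fun a b => (vβ (B := B) I ε a) (sfun I ε₀ ε₁ b))
      = Matrix.diagonal (fun a => if ε a = ε₀ a then (1 : B) else 0) := by
    ext a b
    rcases eq_or_ne a b with rfl | hab
    · cases hεa : ε a <;> cases hε₀ : ε₀ a <;> cases hε₁ : ε₁ a <;>
        simp_all [Matrix.diagonal_apply, vβ, sfun, Finsupp.single_apply, Finsupp.add_apply]
    · cases hεa : ε a <;> cases hε₀ : ε₀ b <;> cases hε₁ : ε₁ b <;>
        simp_all [Matrix.diagonal_apply, vβ, sfun, Finsupp.single_apply, Finsupp.add_apply,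
          hI.eq_iff]
  rw [hdiag, Matrix.det_diagonal]
  by_cases hεε : ε = ε₀
  · subst hεε; simp
  · rw [if_neg hεε]
    obtain ⟨j, hj⟩ := Function.ne_iff.mp hεε
    exact Finset.prod_eq_zero (Finset.mem_univ j) (by simp [hj])

lemma detγ (I : Fin r → ι) (hI : Function.Injective I) (ε₀ ε₁ : Fin r → Bool)
    (hle : ∀ j, ε₀ j = true → ε₁ j = true) (ε : Fin r → Bool) :
    Matrix.det (Matrix.of fun a b => (vγ (B := B) I ε a) (sfun I ε₀ ε₁ b))
      = if ε = ε₁ then 1 else 0 := by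
  have hdiag : (Matrix.of fun a b => (vγ (B := B) I ε a) (sfun I ε₀ ε₁ b))
      = Matrix.diagonal (fun a => if ε a = ε₁ a then (1 : B) else 0) := by
    ext a b
    rcases eq_or_ne a b with rfl | hab
    · cases hεa : ε a <;> cases hε₀ : ε₀ a <;> cases hε₁ : ε₁ a <;>
        simp_all [Matrix.diagonal_apply, vγ, sfun, Finsupp.single_apply, Finsupp.add_apply]
    · cases hεa : ε a <;> cases hε₀ : ε₀ b <;> cases hε₁ : ε₁ b <;>
        simp_all [Matrix.diagonal_apply, vγ, sfun, Finsupp.single_apply, Finsupp.add_apply,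
          hI.eq_iff]
  rw [hdiag, Matrix.det_diagonal]
  by_cases hεε : ε = ε₁
  · subst hεε; simp
  · rw [if_neg hεε]
    obtain ⟨j, hj⟩ := Function.ne_iff.mp hεε
    exact Finset.prod_eq_zero (Finset.mem_univ j) (by simp [hj])

/-- Lemma `beta=gamma`, part (A): for a strictly increasing index sequence
`I` of length `r ≥ 1`, if `χ_I = Σ_ε a^ε_I w^ε_I` satisfies `β(χ_I) = γ(χ_I)`, then
`χ_I = a • S_I` for some `a ∈ B`. -/
theorem stmt1 (r : ℕ) (hr : 1 ≤ r) (I : Fin r → ι) (hI : StrictMono I)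
    (a : (Fin r → Bool) → B)
    (h : mapβ (∑ ε : Fin r → Bool, a ε • mono I ε : TwoFold B ι) =
      mapγ (∑ ε : Fin r → Bool, a ε • mono I ε)) :
    ∃ c : B, (∑ ε : Fin r → Bool, a ε • mono I ε : TwoFold B ι) = c • SI I := by
  classical
  have key : ∀ ε₀ ε₁ : Fin r → Bool, (∀ j, ε₀ j = true → ε₁ j = true) → a ε₀ = a ε₁ := by
    intro ε₀ ε₁ hle
    have h2 := congrArg (coeffFn (B := B) (κ := ι ⊕ ι ⊕ ι) r (sfun I ε₀ ε₁)) h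
    simp only [map_sum, map_smul, mapβ_mono, mapγ_mono, coeffFn_ιMulti,
      detβ I hI.injective ε₀ ε₁ hle, detγ I hI.injective ε₀ ε₁ hle,
      smul_eq_mul, mul_ite, mul_one, mul_zero] at h2
    rwa [Finset.sum_ite_eq', Finset.sum_ite_eq', if_pos (Finset.mem_univ _),
      if_pos (Finset.mem_univ _)] at h2
  refine ⟨a (fun _ => false), ?_⟩
  have hconst : ∀ ε, a ε = a (fun _ => false) :=
    fun ε => (key (fun _ => false) ε (fun j hj => by simp at hj)).symm
  rw [SI, prod_add_expand, Finset.smul_sum]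
  exact Finset.sum_congr rfl fun ε _ => by rw [hconst ε]; rfl
end
end

section
/- With notation as in the context, fix a strictly increasing index sequence I of length r ≥ 1. If χ_I = Σ_ε a^ε_I w^ε_I satisfies β(χ_I) = 0, then χ_I = 0. -/
/-!
Common setup: `B` a commutative ℚ-algebra (playing the role of the coefficient
(graded-)commutative algebra), `ι` an ordered index set for a basis `{w_i}` of an
oddly-graded vector space `W`.  Since `W` is concentrated in odd degrees, the free
graded-commutative algebras `B ⊗ ΛW ⊗ ΛW` and `B ⊗ ΛW ⊗ ΛW ⊗ ΛW` are the exterior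
algebras over `B` on the free modules with bases indexed by `ι ⊕ ι` and `ι ⊕ ι ⊕ ι`.
-/

noncomputable section

variable (B : Type) [CommRing B] [Algebra ℚ B] (ι : Type) [LinearOrder ι]

variable {B ι}

/-- Retraction `ThreeFold → TwoFold`: `u ↦ w, u' ↦ 0, u'' ↦ w'`. -/
def retMap : ThreeFold B ι →ₐ[B] TwoFold B ι :=
  ExteriorAlgebra.lift B
    ⟨(ExteriorAlgebra.ι B).comp ((Finsupp.lift ((ι ⊕ ι) →₀ B) B (ι ⊕ ι ⊕ ι))
      (Sum.elim (fun i => Finsupp.single (Sum.inl i) 1)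
        (Sum.elim (fun _ => 0) (fun i => Finsupp.single (Sum.inr i) 1)))),
     fun m => by simp [ExteriorAlgebra.ι_sq_zero]⟩

lemma retMap_comp_mapβ :
    (retMap : ThreeFold B ι →ₐ[B] TwoFold B ι).comp mapβ = AlgHom.id B (TwoFold B ι) := by
  apply ExteriorAlgebra.hom_ext
  apply Finsupp.lhom_ext'
  intro s
  apply LinearMap.ext_ring
  cases s <;>
    simp [mapβ, genMap, retMap, ExteriorAlgebra.lift_ι_apply]

/-- Lemma `beta=gamma`, part (B): for a strictly increasing index sequence
`I` of length `r ≥ 1`, if `χ_I = Σ_ε a^ε_I w^ε_I` satisfies `β(χ_I) = 0`, then `χ_I = 0`. -/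
theorem stmt2 (r : ℕ) (hr : 1 ≤ r) (I : Fin r → ι) (hI : StrictMono I)
    (a : (Fin r → Bool) → B)
    (h : mapβ (∑ ε : Fin r → Bool, a ε • mono I ε : TwoFold B ι) = 0) :
    (∑ ε : Fin r → Bool, a ε • mono I ε : TwoFold B ι) = 0 := by
  have := congrArg (retMap : ThreeFold B ι →ₐ[B] TwoFold B ι) h
  rw [map_zero] at this
  calc (∑ ε : Fin r → Bool, a ε • mono I ε : TwoFold B ι)
      = (retMap.comp mapβ) (∑ ε : Fin r → Bool, a ε • mono I ε : TwoFold B ι) := by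
        rw [retMap_comp_mapβ]; rfl
    _ = 0 := this
end
end

section
/- With notation as in the context, fix a strictly increasing index sequence I of length r ≥ 1. If χ_I satisfies β(χ_I) = δ(χ_I), then χ_I lies in B ⊗ 1 ⊗ ΛW, i.e., all its monomials involve only the second-factor generators w'. -/
/-!
Common setup: `B` a commutative ℚ-algebra (playing the role of the coefficient
(graded-)commutative algebra), `ι` an ordered index set for a basis `{w_i}` of an
oddly-graded vector space `W`.  Since `W` is concentrated in odd degrees, the free
graded-commutative algebras `B ⊗ ΛW ⊗ ΛW` and `B ⊗ ΛW ⊗ ΛW ⊗ ΛW` are the exterior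
algebras over `B` on the free modules with bases indexed by `ι ⊕ ι` and `ι ⊕ ι ⊕ ι`.
-/

noncomputable section

variable (B : Type) [CommRing B] [Algebra ℚ B] (ι : Type) [LinearOrder ι]

variable {B ι}

-- retraction
def mapφ : ThreeFold B ι →ₐ[B] TwoFold B ι :=
  ExteriorAlgebra.lift B
    ⟨(ExteriorAlgebra.ι B).comp ((Finsupp.lift ((ι ⊕ ι) →₀ B) B (ι ⊕ ι ⊕ ι))
      (Sum.elim (fun i => Finsupp.single (Sum.inl i) 1)
        (Sum.elim (fun _ => (0 : (ι ⊕ ι) →₀ B)) (fun i => Finsupp.single (Sum.inr i) 1)))),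
     fun m => by simp [ExteriorAlgebra.ι_sq_zero]⟩

lemma φβ : (mapφ.comp mapβ : TwoFold B ι →ₐ[B] TwoFold B ι) = AlgHom.id B _ := by
  apply ExteriorAlgebra.hom_ext
  apply Finsupp.lhom_ext
  intro s b
  cases s <;>
    simp [mapφ, mapβ, genMap, ExteriorAlgebra.lift_ι_apply, Finsupp.lift_apply,
      Finsupp.sum_single_index]

lemma φδw (i : ι) : mapφ (mapδ (w i : TwoFold B ι)) = 0 := by
  simp [mapφ, mapδ, genMap, w, ExteriorAlgebra.lift_ι_apply, Finsupp.lift_apply,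
    Finsupp.sum_single_index]

lemma φδw' (i : ι) : mapφ (mapδ (w' i : TwoFold B ι)) = w' i := by
  simp [mapφ, mapδ, genMap, w', ExteriorAlgebra.lift_ι_apply, Finsupp.lift_apply,
    Finsupp.sum_single_index]

lemma φδmono {r : ℕ} (I : Fin r → ι) (ε : Fin r → Bool) :
    mapφ (mapδ (mono I ε : TwoFold B ι)) =
      if ε = (fun _ => true) then mono I (fun _ => true) else 0 := by
  rw [mono, ← AlgHom.comp_apply, map_list_prod, List.map_ofFn]
  by_cases hε : ε = fun _ => true
  · subst hε
    rw [if_pos rfl, mono]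
    have he : (⇑(mapφ.comp mapδ) ∘ fun j => if (fun _ : Fin r => true) j = true
          then (w' (I j) : TwoFold B ι) else w (I j)) =
        fun j => if (fun _ : Fin r => true) j = true then (w' (I j) : TwoFold B ι) else w (I j) := by
      funext j
      simp [Function.comp, AlgHom.comp_apply, φδw']
    rw [he]
  · rw [if_neg hε]
    apply List.prod_eq_zero
    rw [List.mem_ofFn]
    have : ∃ j, ε j = false := by
      by_contra hc
      push_neg at hc
      exact hε (funext fun j => by simpa using hc j)
    obtain ⟨j, hj⟩ := this
    exact ⟨j, by simp [Function.comp, AlgHom.comp_apply, hj, φδw]⟩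


/-- Lemma `beta=gamma`, part (C): for a strictly increasing index sequence
`I` of length `r ≥ 1`, if `χ_I` satisfies `β(χ_I) = δ(χ_I)`, then `χ_I` lies in
`B ⊗ 1 ⊗ ΛW`, i.e. all its monomials involve only the second-factor generators `w'`;
for the fixed index set `I` this means `χ_I = c • w'_I`. -/
theorem stmt3 (r : ℕ) (hr : 1 ≤ r) (I : Fin r → ι) (hI : StrictMono I)
    (a : (Fin r → Bool) → B)
    (h : mapβ (∑ ε : Fin r → Bool, a ε • mono I ε : TwoFold B ι) =
      mapδ (∑ ε : Fin r → Bool, a ε • mono I ε)) :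
    ∃ c : B, (∑ ε : Fin r → Bool, a ε • mono I ε : TwoFold B ι) =
      c • mono I (fun _ => true) := by
  refine ⟨a (fun _ => true), ?_⟩
  have h1 : mapφ (mapβ (∑ ε : Fin r → Bool, a ε • mono I ε : TwoFold B ι)) =
      ∑ ε : Fin r → Bool, a ε • mono I ε := by
    rw [← AlgHom.comp_apply, φβ, AlgHom.id_apply]
  have key : mapφ (mapδ (∑ ε : Fin r → Bool, a ε • mono I ε : TwoFold B ι)) =
      a (fun _ => true) • mono I (fun _ => true) := by
    rw [map_sum, map_sum]
    simp_rw [map_smul, φδmono]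
    rw [Fintype.sum_eq_single (fun _ => true)]
    · rw [if_pos rfl]
    · intro ε hε; rw [if_neg hε, smul_zero]
  rw [← h1, congrArg mapφ h, key]
end
end

section
/- With notation as in the context, fix a strictly increasing index sequence I of length r ≥ 1. If χ_I satisfies α(χ_I) + β(χ_I) = γ(χ_I), then χ_I = a·(S_I − w_I) for some a ∈ B, where S_I = ∏_j (w_{i_j} + w'_{i_j}) and w_I = w_{i_1}⋯w_{i_r} (all in the first factor). -/
/-!
Common setup: `B` a commutative ℚ-algebra (playing the role of the coefficient
(graded-)commutative algebra), `ι` an ordered index set for a basis `{w_i}` of an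
oddly-graded vector space `W`.  Since `W` is concentrated in odd degrees, the free
graded-commutative algebras `B ⊗ ΛW ⊗ ΛW` and `B ⊗ ΛW ⊗ ΛW ⊗ ΛW` are the exterior
algebras over `B` on the free modules with bases indexed by `ι ⊕ ι` and `ι ⊕ ι ⊕ ι`.
-/

noncomputable section

variable (B : Type) [CommRing B] [Algebra ℚ B] (ι : Type) [LinearOrder ι]

variable {B ι}

/-!
Pairing with `f₁ ∧ ⋯ ∧ fᵣ`, for coordinate functionals `fⱼ`, reads off the coefficient of a
monomial `w^ζ_I` of `B ⊗ ΛW ⊗ ΛW ⊗ ΛW`. Each of `α`, `β`, `γ` sends `w^ε_I` to a product whose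
`j`-th factor is a linear form in the generators of index `iⱼ` alone, so as `I` is injective
that coefficient is a diagonal determinant. Write `a₀`, `a₁` for the coefficients of `w_I`, `w'_I`
in `χ_I`. The coefficient of `w_I` in the hypothesis gives `a₀ + a₀ = a₀`. For `ε ≠ 0`, the
coefficient of the monomial with `w''` where `ε` has `w'` and `w'` where `ε` has `w` gives
`0 + a_ε = a₁`: `α` produces no `w''`, `β` reaches it only from `w^ε_I` and `γ` only from `w'_I`.
Since `S_I = ∑_ε w^ε_I`, this is the claim.
-/

open Function

theorem List.prod_ofFn_add {A : Type*} [Semiring A] {n : ℕ} (p q : Fin n → A) :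
    (List.ofFn fun j => p j + q j).prod =
      ∑ s : Fin n → Bool, (List.ofFn fun j => if s j then q j else p j).prod := by
  induction n with
  | zero => simp
  | succ n ih =>
    rw [List.ofFn_succ, List.prod_cons, ih, ← (Fin.consEquiv fun _ => Bool).sum_comp,
      Fintype.sum_prod_type, Fintype.sum_bool, add_mul, Finset.mul_sum, Finset.mul_sum, add_comm]
    simp [List.ofFn_succ]

theorem Fintype.sum_smul_eq_smul_sum_sub {κ R V : Type*} [Fintype κ] [DecidableEq κ] [Ring R]
    [AddCommGroup V] [Module R V] {a : κ → R} {e : κ} {c : R} (he : a e = 0)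
    (hne : ∀ k, k ≠ e → a k = c) (v : κ → V) :
    ∑ k, a k • v k = c • (∑ k, v k - v e) := by
  rw [Fintype.sum_eq_add_sum_compl e, Fintype.sum_eq_add_sum_compl e v, add_sub_cancel_left, he,
    zero_smul, zero_add, Finset.smul_sum]
  exact Finset.sum_congr rfl fun k hk => by rw [hne k (by simpa using hk)]

namespace ExteriorAlgebra

variable {R M : Type*} [CommRing R] [AddCommGroup M] [Module R M]

/-- The pairing with `f₁ ∧ ⋯ ∧ fₙ`; it vanishes outside degree `n`. -/
def detPairing {n : ℕ} (f : Fin n → Module.Dual R M) : ExteriorAlgebra R M →ₗ[R] R :=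
  liftAlternating (Pi.single n (Matrix.detRowAlternating.compLinearMap (LinearMap.pi f)))

theorem detPairing_ιMulti {n : ℕ} (f : Fin n → Module.Dual R M) (v : Fin n → M) :
    detPairing f (ιMulti R n v) = (Matrix.of fun i j => f j (v i)).det := by
  rw [detPairing, liftAlternating_apply_ιMulti, Pi.single_eq_same]
  rfl

end ExteriorAlgebra

open ExteriorAlgebra

section Coefficients

omit [Algebra ℚ B] [LinearOrder ι]

variable {r : ℕ}

theorem SI_eq_sum_mono (I : Fin r → ι) :
    (SI I : TwoFold B ι) = ∑ ε : Fin r → Bool, mono I ε :=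
  List.prod_ofFn_add _ _

theorem mono_eq_ιMulti (I : Fin r → ι) (ε : Fin r → Bool) :
    (mono I ε : TwoFold B ι) =
      ιMulti B r fun j => Finsupp.single (cond (ε j) (Sum.inr (I j)) (Sum.inl (I j))) 1 := by
  rw [mono, ιMulti_apply]
  congr 2
  funext j
  cases ε j <;> rfl

theorem genMap_ιMulti {n : ℕ} (g : ι ⊕ ι → (ι ⊕ ι ⊕ ι) →₀ B) (x : Fin n → ι ⊕ ι) :
    genMap g (ιMulti B n fun j => Finsupp.single (x j) 1) = ιMulti B n fun j => g (x j) := by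
  simp [ιMulti_apply, map_list_prod, List.map_ofFn, genMap, lift_ι_apply, Function.comp_def]

/-- `layer k i` indexes `w_i`, `w'_i`, `w''_i` in `B ⊗ ΛW ⊗ ΛW ⊗ ΛW` for `k = 0, 1, 2`. -/
def layer : Fin 3 → ι → ι ⊕ ι ⊕ ι
  | 0, i => Sum.inl i
  | 1, i => Sum.inr (Sum.inl i)
  | 2, i => Sum.inr (Sum.inr i)

/-- The coefficient of the monomial `w^{ζ₁}_{i₁} ⋯ w^{ζᵣ}_{iᵣ}`, where `w⁰ = w`, `w¹ = w'`,
`w² = w''`. -/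
def layerCoeff (I : Fin r → ι) (ζ : Fin r → Fin 3) : ThreeFold B ι →ₗ[B] B :=
  detPairing fun j => Finsupp.lapply (layer (ζ j) (I j))

theorem layerCoeff_genMap_mono {I : Fin r → ι} (hI : Injective I)
    (g : ι ⊕ ι → (ι ⊕ ι ⊕ ι) →₀ B)
    (hg : ∀ b i k i', i ≠ i' → g (cond b (Sum.inr i) (Sum.inl i)) (layer k i') = 0)
    (ζ : Fin r → Fin 3) (ε : Fin r → Bool) :
    layerCoeff I ζ (genMap g (mono I ε)) =
      ∏ j, g (cond (ε j) (Sum.inr (I j)) (Sum.inl (I j))) (layer (ζ j) (I j)) := by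
  rw [mono_eq_ιMulti, genMap_ιMulti, layerCoeff, detPairing_ιMulti]
  exact Matrix.det_of_isUpperTriangular fun i j hji => hg _ _ _ _ (hI.ne hji.ne')

variable {I : Fin r → ι}

theorem layerCoeff_mapα (hI : Injective I) (ζ : Fin r → Fin 3) (ε : Fin r → Bool) :
    layerCoeff I ζ (mapα (mono I ε : TwoFold B ι)) =
      ∏ j, if ζ j = cond (ε j) 1 0 then 1 else 0 := by
  rw [mapα, layerCoeff_genMap_mono hI]
  · refine Finset.prod_congr rfl fun j _ => ?_
    generalize ε j = b, ζ j = k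
    cases b <;> fin_cases k <;> simp [layer]
  · intro b i k i' h
    cases b <;> fin_cases k <;> simp [layer, h]

theorem layerCoeff_mapβ (hI : Injective I) (ζ : Fin r → Fin 3) (ε : Fin r → Bool) :
    layerCoeff I ζ (mapβ (mono I ε : TwoFold B ι)) =
      ∏ j, if (ε j = true ↔ ζ j = 2) then 1 else 0 := by
  rw [mapβ, layerCoeff_genMap_mono hI]
  · refine Finset.prod_congr rfl fun j _ => ?_
    generalize ε j = b, ζ j = k
    cases b <;> fin_cases k <;> simp [layer]
  · intro b i k i' h
    cases b <;> fin_cases k <;> simp [layer, h]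

theorem layerCoeff_mapγ (hI : Injective I) (ζ : Fin r → Fin 3) (ε : Fin r → Bool) :
    layerCoeff I ζ (mapγ (mono I ε : TwoFold B ι)) =
      ∏ j, if (ε j = false ↔ ζ j = 0) then 1 else 0 := by
  rw [mapγ, layerCoeff_genMap_mono hI]
  · refine Finset.prod_congr rfl fun j _ => ?_
    generalize ε j = b, ζ j = k
    cases b <;> fin_cases k <;> simp [layer]
  · intro b i k i' h
    cases b <;> fin_cases k <;> simp [layer, h]

end Coefficients

theorem stmt4_general (r : ℕ) (I : Fin r → ι) (hI : StrictMono I)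
    (a : (Fin r → Bool) → B)
    (h : mapα (∑ ε : Fin r → Bool, a ε • mono I ε : TwoFold B ι) +
        mapβ (∑ ε : Fin r → Bool, a ε • mono I ε) =
      mapγ (∑ ε : Fin r → Bool, a ε • mono I ε)) :
    ∃ c : B, (∑ ε : Fin r → Bool, a ε • mono I ε : TwoFold B ι) =
      c • (SI I - mono I (fun _ => false)) := by
  have hcoeff (ζ : Fin r → Fin 3) :
      ∑ ε, a ε * layerCoeff I ζ (mapα (mono I ε)) + ∑ ε, a ε * layerCoeff I ζ (mapβ (mono I ε)) =
        ∑ ε, a ε * layerCoeff I ζ (mapγ (mono I ε)) := by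
    simpa only [map_add, map_sum, map_smul, smul_eq_mul] using congrArg (layerCoeff I ζ) h
  simp only [layerCoeff_mapα hI.injective, layerCoeff_mapβ hI.injective,
    layerCoeff_mapγ hI.injective, Fintype.prod_boole] at hcoeff
  have h_bot : a (fun _ => false) = 0 := by
    simpa [← funext_iff, forall_and, Bool.cond_eq_ite, eq_ite_iff, ite_eq_iff] using hcoeff 0
  have h_ne (ε₀ : Fin r → Bool) (hε₀ : ε₀ ≠ fun _ => false) : a ε₀ = a fun _ => true := by
    simpa [← funext_iff, forall_and, hε₀, Bool.cond_eq_ite, eq_ite_iff, ite_eq_iff] using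
      hcoeff fun j => cond (ε₀ j) 2 1
  refine ⟨a fun _ => true, ?_⟩
  rw [SI_eq_sum_mono]
  exact Fintype.sum_smul_eq_smul_sum_sub h_bot h_ne _

/-- Lemma `alpha beta gamma`, part (A): for a strictly increasing index
sequence `I` of length `r ≥ 1`, if `χ_I` satisfies `α(χ_I) + β(χ_I) = γ(χ_I)`, then
`χ_I = a • (S_I − w_I)` for some `a ∈ B`, where `w_I = w_{i_1}⋯w_{i_r}` (first factor). -/
theorem stmt4 (r : ℕ) (hr : 1 ≤ r) (I : Fin r → ι) (hI : StrictMono I)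
    (a : (Fin r → Bool) → B)
    (h : mapα (∑ ε : Fin r → Bool, a ε • mono I ε : TwoFold B ι) +
        mapβ (∑ ε : Fin r → Bool, a ε • mono I ε) =
      mapγ (∑ ε : Fin r → Bool, a ε • mono I ε)) :
    ∃ c : B, (∑ ε : Fin r → Bool, a ε • mono I ε : TwoFold B ι) =
      c • (SI I - mono I (fun _ => false)) :=
  stmt4_general r I hI a h
end
end

section
/- With notation as in the context, fix a strictly increasing index sequence I of length r ≥ 1. If χ_I satisfies β(χ_I) = γ(χ_I) + δ(χ_I), then χ_I = a·(S_I − w'_I) for some a ∈ B, where w'_I = w'_{i_1}⋯w'_{i_r} (all in the second factor). -/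
/-!
Common setup: `B` a commutative ℚ-algebra (playing the role of the coefficient
(graded-)commutative algebra), `ι` an ordered index set for a basis `{w_i}` of an
oddly-graded vector space `W`.  Since `W` is concentrated in odd degrees, the free
graded-commutative algebras `B ⊗ ΛW ⊗ ΛW` and `B ⊗ ΛW ⊗ ΛW ⊗ ΛW` are the exterior
algebras over `B` on the free modules with bases indexed by `ι ⊕ ι` and `ι ⊕ ι ⊕ ι`.
-/

noncomputable section

variable (B : Type) [CommRing B] [Algebra ℚ B] (ι : Type) [LinearOrder ι]

variable {B ι}

/-!
Compose the identity `β(χ) = γ(χ) + δ(χ)` with the `B`-algebra map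
`B ⊗ ΛW ⊗ ΛW ⊗ ΛW → B ⊗ ΛW ⊗ ΛW` that kills the third factor (`w ↦ w, w' ↦ w', w'' ↦ 0`).
It turns `γ` into the identity, while `β` and `δ` become maps killing every `w'_i`, so they
annihilate all monomials of `χ_I` except `w_I`, sending it to `S_I` and `w'_I` respectively.
With `a` the coefficient of `w_I` this reads `a • S_I = χ_I + a • w'_I`.
-/

section

variable {B ι : Type} [CommRing B]

def dropThird : ThreeFold B ι →ₐ[B] TwoFold B ι :=
  ExteriorAlgebra.map <| Finsupp.linearCombination B <|
    Sum.elim (fun i => Finsupp.single (Sum.inl i) 1)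
      (Sum.elim (fun i => Finsupp.single (Sum.inr i) 1) 0)

lemma genMap_ι_single (g : ι ⊕ ι → (ι ⊕ ι ⊕ ι) →₀ B) (x : ι ⊕ ι) :
    genMap g (ExteriorAlgebra.ι B (Finsupp.single x 1)) = ExteriorAlgebra.ι B (g x) := by
  simp [genMap]

lemma dropThird_ι_single (x : ι ⊕ ι ⊕ ι) :
    dropThird (ExteriorAlgebra.ι B (Finsupp.single x 1) : ThreeFold B ι) =
      ExteriorAlgebra.ι B (Sum.elim (fun i => Finsupp.single (Sum.inl i) 1)
        (Sum.elim (fun i => Finsupp.single (Sum.inr i) 1) 0) x) := by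
  simp [dropThird]

lemma dropThird_comp_mapγ : (dropThird.comp mapγ : TwoFold B ι →ₐ[B] TwoFold B ι) = .id B _ := by
  ext (i | i) <;> simp [mapγ, genMap_ι_single, dropThird_ι_single]

lemma dropThird_mapβ_w (i : ι) : dropThird (mapβ (w i : TwoFold B ι)) = w i + w' i := by
  simp [mapβ, w, w', genMap_ι_single, dropThird_ι_single]

lemma dropThird_mapβ_w' (i : ι) : dropThird (mapβ (w' i : TwoFold B ι)) = 0 := by
  simp [mapβ, w', genMap_ι_single, dropThird_ι_single]

lemma dropThird_mapδ_w (i : ι) : dropThird (mapδ (w i : TwoFold B ι)) = w' i := by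
  simp [mapδ, w, w', genMap_ι_single, dropThird_ι_single]

lemma dropThird_mapδ_w' (i : ι) : dropThird (mapδ (w' i : TwoFold B ι)) = 0 := by
  simp [mapδ, w', genMap_ι_single, dropThird_ι_single]

lemma map_mono {A : Type*} [Semiring A] [Algebra B A] (f : TwoFold B ι →ₐ[B] A) {r : ℕ}
    (I : Fin r → ι) (ε : Fin r → Bool) :
    f (mono I ε) = (List.ofFn fun j => if ε j then f (w' (I j)) else f (w (I j))).prod := by
  simp only [mono, map_list_prod, List.map_ofFn, Function.comp_def, apply_ite f]

lemma map_sum_smul_mono_of_map_w'_eq_zero {A : Type*} [Semiring A] [Algebra B A]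
    (f : TwoFold B ι →ₐ[B] A) (hf : ∀ i, f (w' i) = 0) {r : ℕ} (I : Fin r → ι)
    (a : (Fin r → Bool) → B) :
    f (∑ ε, a ε • mono I ε) = a (fun _ => false) • (List.ofFn fun j => f (w (I j))).prod := by
  rw [map_sum, Finset.sum_eq_single (fun _ => false)]
  · simp [map_mono]
  · intro ε _ hε
    obtain ⟨j, hj⟩ := Function.ne_iff.mp hε
    rw [map_smul, map_mono, List.prod_eq_zero, smul_zero]
    exact List.mem_ofFn.mpr ⟨j, by simp_all⟩
  · simp

end

theorem stmt5_general (r : ℕ) (I : Fin r → ι)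
    (a : (Fin r → Bool) → B)
    (h : mapβ (∑ ε : Fin r → Bool, a ε • mono I ε : TwoFold B ι) =
      mapγ (∑ ε : Fin r → Bool, a ε • mono I ε) +
        mapδ (∑ ε : Fin r → Bool, a ε • mono I ε)) :
    ∃ c : B, (∑ ε : Fin r → Bool, a ε • mono I ε : TwoFold B ι) =
      c • (SI I - mono I (fun _ => true)) := by
  have h' := congrArg dropThird h
  rw [map_add, ← AlgHom.comp_apply dropThird mapγ, dropThird_comp_mapγ, AlgHom.id_apply,
    ← AlgHom.comp_apply dropThird mapβ, ← AlgHom.comp_apply dropThird mapδ,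
    map_sum_smul_mono_of_map_w'_eq_zero _ dropThird_mapβ_w',
    map_sum_smul_mono_of_map_w'_eq_zero _ dropThird_mapδ_w'] at h'
  simp only [AlgHom.comp_apply, dropThird_mapβ_w, dropThird_mapδ_w] at h'
  refine ⟨a fun _ => false, ?_⟩
  rw [smul_sub, eq_sub_iff_add_eq, SI, h']
  simp [mono]

/-- Lemma `alpha beta gamma`, part (B): for a strictly increasing index
sequence `I` of length `r ≥ 1`, if `χ_I` satisfies `β(χ_I) = γ(χ_I) + δ(χ_I)`, then
`χ_I = a • (S_I − w'_I)` for some `a ∈ B`, where `w'_I = w'_{i_1}⋯w'_{i_r}`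
(second factor). -/
theorem stmt5 (r : ℕ) (hr : 1 ≤ r) (I : Fin r → ι) (hI : StrictMono I)
    (a : (Fin r → Bool) → B)
    (h : mapβ (∑ ε : Fin r → Bool, a ε • mono I ε : TwoFold B ι) =
      mapγ (∑ ε : Fin r → Bool, a ε • mono I ε) +
        mapδ (∑ ε : Fin r → Bool, a ε • mono I ε)) :
    ∃ c : B, (∑ ε : Fin r → Bool, a ε • mono I ε : TwoFold B ι) =
      c • (SI I - mono I (fun _ => true)) :=
  stmt5_general r I a h
end
end

section
/- Let (B, d_B) → (B ⊗ ΛW, D) be a relative Sullivan model with projection a DG algebra map (so the ideal generated by W is D-stable), with K-S basis {w_i} and H^{odd}(B) = 0, and all w_i of odd degree. Then by a change of generators one can arrange the linear part of D to vanish: explicitly, if D(w_k) = Σ_{i<k} b_{i,k} w_i + χ with χ ∈ B ⊗ Λ^{≥2}W and D(w_i) ∈ B ⊗ Λ^{≥2}W for all i < k, then each b_{i,k} is a d_B-exact cycle: d_B(b_{i,k}) = 0 and b_{i,k} = d_B(η_{i,k}) for some η_{i,k} ∈ B. -/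
/-!
Common setup for the fibrewise Hopf / Leray–Samelson statements.

`B` is a commutative DG algebra over `ℚ`, with (cohomological) grading
`𝒜 : ℤ → Submodule ℚ B` and differential `dB`.  `W` is a graded vector space with
ordered basis indexed by `ι`, with degrees `deg : ι → ℤ`; when `W` is concentrated in
odd degrees the free graded-commutative algebra `ΛW` is the exterior algebra, so the
relative Sullivan model `B ⊗ ΛW` is the exterior algebra over `B` on `ι →₀ B`, and
likewise `B ⊗ ΛW ⊗ ΛW` and `B ⊗ ΛW ⊗ ΛW ⊗ ΛW` are exterior algebras on the doubled
and tripled index sets.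
-/

noncomputable section

variable (B : Type) [CommRing B] [Algebra ℚ B] 

/-- The "model" algebra `B ⊗ ΛW` for `W` oddly graded with basis indexed by `κ`. -/
abbrev MExt (κ : Type) := ExteriorAlgebra B (κ →₀ B)

variable {B} {κ κ' ι : Type} [LinearOrder ι]

/-- The generator `w_k` of `B ⊗ ΛW`. -/
def egen (k : κ) : MExt B κ := ExteriorAlgebra.ι B (Finsupp.single k 1)

/-- The `B`-algebra map induced by relabelling generators along `f`. -/
def emb (f : κ → κ') : MExt B κ →ₐ[B] MExt B κ' :=
  ExteriorAlgebra.lift B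
    ⟨(ExteriorAlgebra.ι B).comp (Finsupp.lmapDomain B B f),
     fun m => ExteriorAlgebra.ι_sq_zero _⟩

/-- The projection `B ⊗ ΛW → B` killing all generators (the model of the section). -/
def projExt : MExt B κ →ₐ[B] B :=
  ExteriorAlgebra.lift B ⟨0, fun m => zero_mul 0⟩

/-- `dB` is a differential on the graded algebra `(B, 𝒜)`: it squares to zero, raises
degree by one, and satisfies the (graded) Leibniz rule. -/
def IsBDifferential (𝒜 : ℤ → Submodule ℚ B) (dB : B →ₗ[ℚ] B) : Prop :=
  (∀ b, dB (dB b) = 0) ∧ (∀ (n : ℤ), ∀ b ∈ 𝒜 n, dB b ∈ 𝒜 (n + 1)) ∧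
    (∀ (n : ℤ), ∀ a ∈ 𝒜 n, ∀ b : B, dB (a * b) = dB a * b + (n.negOnePow : ℤ) • (a * dB b))

/-- `D` is a differential on the model `B ⊗ ΛW` (for `W` oddly graded) restricting to
`dB` on `B`: it squares to zero and is the unique such derivation determined by its
values on `B` and on the (odd) generators. -/
def IsModelDifferential (𝒜 : ℤ → Submodule ℚ B) (dB : B →ₗ[ℚ] B)
    (D : MExt B κ →ₗ[ℚ] MExt B κ) : Prop :=
  (∀ x, D (D x) = 0) ∧
  (∀ b : B, D (algebraMap B _ b) = algebraMap B _ (dB b)) ∧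
  (∀ (n : ℤ), ∀ a ∈ 𝒜 n, ∀ y : MExt B κ,
    D (algebraMap B _ a * y) =
      algebraMap B _ (dB a) * y + (n.negOnePow : ℤ) • (algebraMap B _ a * D y)) ∧
  (∀ (k : κ) (y : MExt B κ), D (egen k * y) = D (egen k) * y - egen k * D y)

/-- The (`B`-submodule corresponding to the) ideal generated by the `w_i`. -/
def genIdeal (B : Type) [CommRing B] [Algebra ℚ B] (κ : Type) : Submodule B (MExt B κ) :=
  Submodule.span B (Set.range (egen : κ → MExt B κ)) * ⊤

/-- `B ⊗ Λ^{≥2}W`, the span of words of length at least two in the generators. -/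
def lenGeTwo (B : Type) [CommRing B] [Algebra ℚ B] (κ : Type) : Submodule B (MExt B κ) :=
  Submodule.span B (Set.range (egen : κ → MExt B κ)) *
    Submodule.span B (Set.range (egen : κ → MExt B κ)) * ⊤

/-- `w_i` in the first factor of `B ⊗ ΛW ⊗ ΛW`. -/
def wL (i : ι) : MExt B (ι ⊕ ι) := egen (Sum.inl i)

/-- `w'_i` in the second factor of `B ⊗ ΛW ⊗ ΛW`. -/
def wR (i : ι) : MExt B (ι ⊕ ι) := egen (Sum.inr i)

/-- The inclusion `B ⊗ ΛW → B ⊗ ΛW ⊗ ΛW` as the first factor. -/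
def inlA : MExt B ι →ₐ[B] MExt B (ι ⊕ ι) := emb Sum.inl

/-- The inclusion `B ⊗ ΛW → B ⊗ ΛW ⊗ ΛW` as the second factor. -/
def inrA : MExt B ι →ₐ[B] MExt B (ι ⊕ ι) := emb Sum.inr

/-- A relative Sullivan model structure for `D` on `B ⊗ ΛW`: `W` has a K-S basis (each
`D(w_i)` involves only generators `w_j` with `j < i`) and the ideal generated by `W` is
`D`-stable (equivalently, the projection onto `B` is a DG map). -/
def IsRelSullivan (D : MExt B ι →ₗ[ℚ] MExt B ι) : Prop :=
  (∀ i : ι, D (egen i) ∈ Algebra.adjoin B {x : MExt B ι | ∃ j < i, x = egen j}) ∧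
  (∀ x ∈ genIdeal B ι, D x ∈ genIdeal B ι)

/-- `D2` is the differential on `B ⊗ ΛW ⊗ ΛW` induced by `D` (i.e. `D ⊗ 1 + 1 ⊗ D`). -/
def Extends2 (D : MExt B ι →ₗ[ℚ] MExt B ι)
    (D2 : MExt B (ι ⊕ ι) →ₗ[ℚ] MExt B (ι ⊕ ι)) : Prop :=
  (∀ x, D2 (inlA x) = inlA (D x)) ∧ (∀ x, D2 (inrA x) = inrA (D x))

/-- `C` is a fibrewise multiplication of models: a DG algebra map
`B ⊗ ΛW → B ⊗ ΛW ⊗ ΛW` which is the identity on `B`, commutes with the projections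
onto `B`, and satisfies `C(w) − w − w' ∈ B ⊗ Λ⁺W ⊗ Λ⁺W`. -/
def IsFibMult (D : MExt B ι →ₗ[ℚ] MExt B ι)
    (D2 : MExt B (ι ⊕ ι) →ₗ[ℚ] MExt B (ι ⊕ ι))
    (C : MExt B ι →ₐ[B] MExt B (ι ⊕ ι)) : Prop :=
  (∀ x, projExt (C x) = projExt x) ∧
  (∀ x, D2 (C x) = C (D x)) ∧
  (∀ i : ι, C (egen i) - wL i - wR i ∈
    Submodule.span B (Set.range (wL : ι → MExt B (ι ⊕ ι))) *
      Submodule.span B (Set.range (wR : ι → MExt B (ι ⊕ ι))) * ⊤)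

/-- The coefficientwise extension of a differential to `A[t]`. -/
def pmap (Dk : MExt B κ →ₗ[ℚ] MExt B κ) (p : Polynomial (MExt B κ)) : Polynomial (MExt B κ) :=
  p.sum fun n a => Polynomial.C (Dk a) * Polynomial.X ^ n

/-- The `t`-derivative of `p ∈ A[t]`. -/
def pder (p : Polynomial (MExt B κ)) : Polynomial (MExt B κ) :=
  p.sum fun n a => (n : ℤ) • (Polynomial.C a * Polynomial.X ^ (n - 1))

/-- The differential on `A ⊗ Λ(t, dt)`, modelled on `A[t] ⊕ A[t]·dt`:
`d(p + q·dt) = (Dp) + (Dq − ∂p/∂t)·dt` (the sign records the Koszul convention for the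
odd elements to which the homotopies below are applied). -/
def homDiff (Dk : MExt B κ →ₗ[ℚ] MExt B κ)
    (x : DualNumber (Polynomial (MExt B κ))) : DualNumber (Polynomial (MExt B κ)) :=
  TrivSqZeroExt.inl (pmap Dk x.fst) + TrivSqZeroExt.inr (pmap Dk x.snd - pder x.fst)

/-- `F₀` and `F₁` are DG homotopic under and over `B`, via a DG algebra homotopy
`K : B ⊗ ΛW → (B ⊗ ΛW ⊗ ⋯) ⊗ Λ(t, dt)` which is the identity on `B`, commutes with the
differentials and the projections onto `B`, and evaluates to `F₀`, `F₁` at `t = 0, 1`. -/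
def ModelHomotopic (Dsrc : MExt B ι →ₗ[ℚ] MExt B ι) (Dtgt : MExt B κ →ₗ[ℚ] MExt B κ)
    (F0 F1 : MExt B ι → MExt B κ) : Prop :=
  ∃ K : MExt B ι →+* DualNumber (Polynomial (MExt B κ)),
    (∀ b : B, K (algebraMap B _ b) = TrivSqZeroExt.inl (Polynomial.C (algebraMap B _ b))) ∧
    (∀ x, homDiff Dtgt (K x) = K (Dsrc x)) ∧
    (∀ x, (K x).fst.eval 0 = F0 x) ∧
    (∀ x, (K x).fst.eval 1 = F1 x) ∧
    (∀ x, Polynomial.map (projExt : MExt B κ →ₐ[B] B).toRingHom (K x).fst =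
      Polynomial.C (projExt x)) ∧
    (∀ x, Polynomial.map (projExt : MExt B κ →ₐ[B] B).toRingHom (K x).snd = 0)

/-- Equivalence of fibrewise multiplications of models `(D, C) ≡ (D', C')`: a DG
algebra isomorphism `φ : (B ⊗ ΛW, D') → (B ⊗ ΛW, D)` under and over `B`, such that
`C ∘ φ` and `(1 ⊗ φ ⊗ φ) ∘ C'` are DG homotopic under and over `B`.  (`φ2` is the map
`1 ⊗ φ ⊗ φ`, characterised by its compatibility with the two inclusions.) -/
def MultModelsEquiv (D : MExt B ι →ₗ[ℚ] MExt B ι)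
    (D2 : MExt B (ι ⊕ ι) →ₗ[ℚ] MExt B (ι ⊕ ι))
    (C : MExt B ι →ₐ[B] MExt B (ι ⊕ ι))
    (D' : MExt B ι →ₗ[ℚ] MExt B ι)
    (C' : MExt B ι →ₐ[B] MExt B (ι ⊕ ι)) : Prop :=
  ∃ (φ : MExt B ι ≃ₐ[B] MExt B ι) (φ2 : MExt B (ι ⊕ ι) →ₐ[B] MExt B (ι ⊕ ι)),
    (∀ x, projExt (φ x) = projExt x) ∧
    (∀ x, D (φ x) = φ (D' x)) ∧
    (∀ x, φ2 (inlA x) = inlA (φ x)) ∧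
    (∀ x, φ2 (inrA x) = inrA (φ x)) ∧
    ModelHomotopic D' D2 (fun x => C (φ x)) (fun x => φ2 (C' x))

/-- The standard comultiplication `C₀(w) = w + w'`. -/
def stdComult (B : Type) [CommRing B] [Algebra ℚ B] (ι : Type) : MExt B ι →ₐ[B] MExt B (ι ⊕ ι) :=
  ExteriorAlgebra.lift B
    ⟨(ExteriorAlgebra.ι B).comp
      ((Finsupp.lift ((ι ⊕ ι) →₀ B) B ι)
        (fun i => Finsupp.single (Sum.inl i) 1 + Finsupp.single (Sum.inr i) 1)),
     fun m => ExteriorAlgebra.ι_sq_zero _⟩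

/-!
The coefficient of `w_i` in the word-length-one part of an element is read off by the
`B`-algebra map to the dual numbers `B[ε]` sending `w_j ↦ δ_{ij} ε`; it satisfies a Leibniz
rule relative to the projection onto `B`, so it vanishes on products of two elements of the
ideal generated by `W`, hence on `B ⊗ Λ^{≥2}W` and (the ideal being `D`-stable) on
`D(B ⊗ Λ^{≥2}W)`. Taking this coefficient of `0 = D²(w_k)` leaves exactly `d_B(b_{i,k})`, so
`b_{i,k}` is a cycle; its degree `|w_k| + 1 - |w_i|` is odd, so it is a boundary.
-/

open scoped Pointwise

namespace MExt

section DualNumbers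

variable {R : Type} [CommRing R]

def toDual (i : κ) : MExt R κ →ₐ[R] DualNumber R :=
  ExteriorAlgebra.lift R
    ⟨(TrivSqZeroExt.inrHom R R).comp (Finsupp.lapply i),
     fun _ => TrivSqZeroExt.inr_mul_inr R _ _⟩

def linCoeff (i : κ) : MExt R κ →ₗ[R] R :=
  TrivSqZeroExt.sndHom R R ∘ₗ (toDual i).toLinearMap

lemma projExt_egen (j : κ) : projExt (egen (B := R) j) = 0 := by
  rw [projExt, egen]
  erw [ExteriorAlgebra.lift_ι_apply]
  rfl

lemma toDual_egen (i j : κ) :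
    toDual i (egen (B := R) j) = TrivSqZeroExt.inr (Finsupp.single j 1 i) := by
  rw [toDual, egen]
  erw [ExteriorAlgebra.lift_ι_apply]
  rfl

lemma fst_toDual (i : κ) (x : MExt R κ) : (toDual i x).fst = projExt x := by
  suffices (TrivSqZeroExt.fstHom R R R).comp (toDual i) = (projExt : MExt R κ →ₐ[R] R) from
    AlgHom.congr_fun this x
  refine ExteriorAlgebra.hom_ext (Finsupp.basisSingleOne.ext fun j => ?_)
  change (toDual i (egen j)).fst = projExt (egen (B := R) j)
  rw [toDual_egen, projExt_egen, TrivSqZeroExt.fst_inr]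

lemma linCoeff_egen (i j : κ) : linCoeff i (egen (B := R) j) = Finsupp.single j 1 i := by
  simp [linCoeff, toDual_egen]

lemma linCoeff_mul (i : κ) (x y : MExt R κ) :
    linCoeff i (x * y) = projExt x * linCoeff i y + projExt y * linCoeff i x := by
  simp [linCoeff, TrivSqZeroExt.snd_mul, ← fst_toDual i, mul_comm]

end DualNumbers

lemma egen_mul_mem_genIdeal (j : κ) (z : MExt B κ) : egen j * z ∈ genIdeal B κ :=
  Submodule.mul_mem_mul (Submodule.subset_span ⟨j, rfl⟩) Submodule.mem_top

lemma egen_mem_genIdeal (j : κ) : egen j ∈ genIdeal B κ := by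
  simpa using egen_mul_mem_genIdeal j (1 : MExt B κ)

lemma projExt_eq_zero_of_mem_genIdeal {x : MExt B κ} (hx : x ∈ genIdeal B κ) :
    projExt x = 0 := by
  refine (Submodule.mul_le (P := LinearMap.ker (projExt (B := B)).toLinearMap)).mpr
    (fun m hm n _ => ?_) hx
  have hspan : Submodule.span B (Set.range (egen : κ → MExt B κ)) ≤
      LinearMap.ker (projExt (B := B)).toLinearMap :=
    Submodule.span_le.mpr (by rintro _ ⟨j, rfl⟩; exact projExt_egen j)
  have hm0 : projExt m = 0 := hspan hm
  simp [hm0]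

lemma linCoeff_mul_eq_zero_of_mem_genIdeal (i : κ) {x y : MExt B κ} (hx : x ∈ genIdeal B κ)
    (hy : y ∈ genIdeal B κ) : linCoeff i (x * y) = 0 := by
  simp [linCoeff_mul, projExt_eq_zero_of_mem_genIdeal hx, projExt_eq_zero_of_mem_genIdeal hy]

lemma lenGeTwo_eq_span :
    lenGeTwo B κ = Submodule.span B (Set.range egen * Set.range egen * Set.univ) := by
  rw [lenGeTwo, ← Submodule.span_univ, Submodule.span_mul_span, Submodule.span_mul_span]

lemma map_eq_zero_of_mem_lenGeTwo {M : Type*} [AddCommGroup M] (f : MExt B κ →+ M)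
    (hf : ∀ a c z, f (egen a * egen c * z) = 0) {x : MExt B κ} (hx : x ∈ lenGeTwo B κ) :
    f x = 0 := by
  rw [lenGeTwo_eq_span] at hx
  induction hx using Submodule.closure_induction with
  | zero => exact map_zero f
  | add x y _ _ hx hy => rw [map_add, hx, hy, add_zero]
  | smul_mem r x hx =>
    obtain ⟨_, ⟨_, ⟨a, rfl⟩, _, ⟨c, rfl⟩, rfl⟩, z, -, rfl⟩ := hx
    change f (r • (egen a * egen c * z)) = 0
    rw [← mul_smul_comm]
    exact hf a c (r • z)

lemma linCoeff_eq_zero_of_mem_lenGeTwo (i : κ) {x : MExt B κ} (hx : x ∈ lenGeTwo B κ) :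
    linCoeff i x = 0 :=
  map_eq_zero_of_mem_lenGeTwo (linCoeff i).toAddMonoidHom (fun a c z => by
    rw [mul_assoc]
    exact linCoeff_mul_eq_zero_of_mem_genIdeal i (egen_mem_genIdeal a)
      (egen_mul_mem_genIdeal c z)) hx

lemma linCoeff_D_eq_zero_of_mem_lenGeTwo (i : κ) (D : MExt B κ →ₗ[ℚ] MExt B κ)
    (hLeibniz : ∀ j y, D (egen j * y) = D (egen j) * y - egen j * D y)
    (hI : ∀ x ∈ genIdeal B κ, D x ∈ genIdeal B κ) {x : MExt B κ} (hx : x ∈ lenGeTwo B κ) :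
    linCoeff i (D x) = 0 :=
  map_eq_zero_of_mem_lenGeTwo ((linCoeff i).toAddMonoidHom.comp D.toAddMonoidHom)
    (fun a c z => by
      have hcz := egen_mul_mem_genIdeal c z
      change linCoeff i (D (egen a * egen c * z)) = 0
      rw [mul_assoc, hLeibniz, map_sub,
        linCoeff_mul_eq_zero_of_mem_genIdeal i (hI _ (egen_mem_genIdeal a)) hcz,
        linCoeff_mul_eq_zero_of_mem_genIdeal i (egen_mem_genIdeal a) (hI _ hcz), sub_zero]) hx

lemma linCoeff_D_algebraMap_mul_egen {𝒜 : ℤ → Submodule ℚ B} {dB : B →ₗ[ℚ] B}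
    {D : MExt B κ →ₗ[ℚ] MExt B κ} (hD : IsModelDifferential 𝒜 dB D) {n : ℤ} {c : B}
    (hc : c ∈ 𝒜 n) {j : κ} (hj : D (egen j) ∈ lenGeTwo B κ) (i : κ) :
    linCoeff i (D (algebraMap B _ c * egen j)) = Finsupp.single j (dB c) i := by
  rw [hD.2.2.1 n c hc, map_add, map_zsmul, ← Algebra.smul_def, ← Algebra.smul_def, map_smul,
    map_smul, linCoeff_egen, linCoeff_eq_zero_of_mem_lenGeTwo i hj]
  simp only [smul_zero, add_zero]
  rw [← Finsupp.smul_apply, Finsupp.smul_single_one]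

theorem dB_eq_zero_of_D_eq_sum_add {𝒜 : ℤ → Submodule ℚ B} {dB : B →ₗ[ℚ] B}
    {D : MExt B κ →ₗ[ℚ] MExt B κ} (hD : IsModelDifferential 𝒜 dB D)
    (hI : ∀ x ∈ genIdeal B κ, D x ∈ genIdeal B κ) {S : Finset κ} {b : κ → B} {n : κ → ℤ}
    (hb : ∀ j ∈ S, b j ∈ 𝒜 (n j)) (hS : ∀ j ∈ S, D (egen j) ∈ lenGeTwo B κ)
    {χ : MExt B κ} (hχ : χ ∈ lenGeTwo B κ) {y : MExt B κ}
    (hy : D y = ∑ j ∈ S, algebraMap B _ (b j) * egen j + χ) {i : κ} (hi : i ∈ S) :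
    dB (b i) = 0 := by
  classical
  have h := congrArg (linCoeff i) (hD.1 y)
  rw [hy, map_add, map_sum, map_add, map_sum,
    Finset.sum_congr rfl fun j hj => linCoeff_D_algebraMap_mul_egen hD (hb j hj) (hS j hj) i,
    linCoeff_D_eq_zero_of_mem_lenGeTwo i D hD.2.2.2 hI hχ, add_zero, map_zero] at h
  simpa [Finsupp.single_apply, hi] using h

end MExt

theorem stmt15_general (B : Type) [CommRing B] [Algebra ℚ B]
    (𝒜 : ℤ → Submodule ℚ B)
    (ι : Type) [LinearOrder ι] (deg : ι → ℤ) (hWodd : ∀ i, Odd (deg i))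
    (dB : B →ₗ[ℚ] B)
    (hHodd : ∀ n : ℤ, Odd n → ∀ b ∈ 𝒜 n, dB b = 0 → ∃ c, dB c = b)
    (D : MExt B ι →ₗ[ℚ] MExt B ι) (hD : IsModelDifferential 𝒜 dB D)
    (hSul : IsRelSullivan D)
    (k : ι) (S : Finset ι) (hS : ∀ i ∈ S, i < k)
    (b : ι → B) (hdeg : ∀ i ∈ S, b i ∈ 𝒜 (deg k + 1 - deg i))
    (χ : MExt B ι) (hχ : χ ∈ lenGeTwo B ι)
    (hlow : ∀ i, i < k → D (egen i) ∈ lenGeTwo B ι)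
    (hDk : D (egen k) = (∑ i ∈ S, algebraMap B _ (b i) * egen i) + χ) :
    ∀ i ∈ S, dB (b i) = 0 ∧ ∃ η : B, dB η = b i := by
  intro i hi
  have hcycle : dB (b i) = 0 :=
    MExt.dB_eq_zero_of_D_eq_sum_add hD hSul.2 hdeg (fun j hj => hlow j (hS j hj)) hχ hDk hi
  have hodd : Odd (deg k + 1 - deg i) := (hWodd k).add_one.sub_odd (hWodd i)
  exact ⟨hcycle, hHodd _ hodd (b i) (hdeg i hi) hcycle⟩

/-- induction step in the proof of the fibrewise Hopf theorem: let
`(B, d_B) → (B ⊗ ΛW, D)` be a relative Sullivan model with projection a DG algebra map,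
K-S basis `{w_i}` all of odd degree, and `H^{odd}(B) = 0`.  If
`D(w_k) = Σ_{i<k} b_{i,k} w_i + χ` with `χ ∈ B ⊗ Λ^{≥2}W` and `D(w_i) ∈ B ⊗ Λ^{≥2}W`
for all `i < k`, then each coefficient `b_{i,k}` is a `d_B`-exact cycle:
`d_B(b_{i,k}) = 0` and `b_{i,k} = d_B(η_{i,k})` for some `η_{i,k} ∈ B`. -/
theorem stmt15 (B : Type) [CommRing B] [Algebra ℚ B]
    (𝒜 : ℤ → Submodule ℚ B) [GradedAlgebra 𝒜]
    (ι : Type) [LinearOrder ι] (deg : ι → ℤ) (hWodd : ∀ i, Odd (deg i))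
    (dB : B →ₗ[ℚ] B) (hdB : IsBDifferential 𝒜 dB)
    (hHodd : ∀ n : ℤ, Odd n → ∀ b ∈ 𝒜 n, dB b = 0 → ∃ c, dB c = b)
    (D : MExt B ι →ₗ[ℚ] MExt B ι) (hD : IsModelDifferential 𝒜 dB D)
    (hSul : IsRelSullivan D)
    (k : ι) (S : Finset ι) (hS : ∀ i ∈ S, i < k)
    (b : ι → B) (hdeg : ∀ i ∈ S, b i ∈ 𝒜 (deg k + 1 - deg i))
    (χ : MExt B ι) (hχ : χ ∈ lenGeTwo B ι)
    (hlow : ∀ i, i < k → D (egen i) ∈ lenGeTwo B ι)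
    (hDk : D (egen k) = (∑ i ∈ S, algebraMap B _ (b i) * egen i) + χ) :
    ∀ i ∈ S, dB (b i) = 0 ∧ ∃ η : B, dB η = b i :=
  stmt15_general B 𝒜 ι deg hWodd dB hHodd D hD hSul k S hS b hdeg χ hχ hlow hDk
end
end
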